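/- arXiv:math/0302098 — 4 statements merged into one kernel-verified Lean document; each statement's English description precedes it below -/
import Mathlib

section
/- The generalized Fibonacci group F(n−1, n) is not left-orderable for any n > 2. -/
/-- A group is left-orderable if there is a strict total order that is left-invariant. -/
def IsLeftOrderable (G : Type*) [Group G] : Prop :=
  ∃ r : G → G → Prop, IsStrictTotalOrder G r ∧ ∀ x y z : G, r x y → r (z * x) (z * y)

/-- The relator `x_i x_{i+1} ⋯ x_{i+n-2} x_{i+n-1}⁻¹` of the generalized Fibonacci
group `F(n-1, n)`, with indices taken modulo `n`. -/
def fibRel (n : ℕ) (i : ZMod n) : FreeGroup (ZMod n) :=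
  (((List.range (n - 1)).map (fun j => FreeGroup.of (i + (j : ZMod n)))).prod) *
    (FreeGroup.of (i + ((n - 1 : ℕ) : ZMod n)))⁻¹

/-- The generalized Fibonacci group
`F(n-1, n) = ⟨x₁,…,xₙ | x₁⋯x_{n-1} = xₙ, x₂⋯xₙ = x₁, …, xₙx₁⋯x_{n-2} = x_{n-1}⟩`. -/
def FibGroup (n : ℕ) : Type :=
  PresentedGroup {w : FreeGroup (ZMod n) | ∃ i : ZMod n, w = fibRel n i}

instance (n : ℕ) : Group (FibGroup n) :=
  inferInstanceAs (Group (PresentedGroup _))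

/-!
Write `xᵢ` for the generators. Comparing the relation starting at `x_{i+1}` with the one starting
at `x_{i+2}`, the word `P = x_{i+2} ⋯ x_{i+n-1}` satisfies both `x_{i+1} P = xᵢ` and
`P xᵢ = x_{i+1}`, hence `x_{i+1}² = x_{i+1} P xᵢ = xᵢ²`: all generators have the same square.
In a left-ordered group, elements with equal squares lie on the same side of `1`. So if the image
of some generator is positive, all of them are, hence so is the image of `P`, and
`xᵢ = x_{i+1} P > x_{i+1}`; the images of `x₀, x₁, …, xₙ = x₀` then strictly decrease, which is
absurd. The negative case is the same argument for the reversed order. Thus every homomorphism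
from `F(n-1, n)` to a left-ordered group is trivial, while `F(n-1, n)` is nontrivial: sending
`x₀` and `x₁` to `-1` and the other generators to `1` defines a homomorphism onto `ℤˣ`.
-/

section LeftOrdered

variable {G : Type*} [Group G] [LinearOrder G] [MulLeftMono G]

lemma one_lt_iff_of_sq_eq {a b : G} (h : a ^ 2 = b ^ 2) : 1 < a ↔ 1 < b := by
  rw [← one_lt_pow_iff two_ne_zero, h, one_lt_pow_iff two_ne_zero]

lemma List.one_lt_prod_of_one_lt_of_ne_nil {l : List G} (hl : ∀ a ∈ l, 1 < a) (hne : l ≠ []) :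
    1 < l.prod :=
  List.prod_induction_nonempty _ (fun _ _ => Left.one_lt_mul') hne hl

end LeftOrdered

lemma ZMod.prod_range_natCast_add {M : Type*} [CommMonoid M] (n : ℕ) [NeZero n]
    (f : ZMod n → M) (i : ZMod n) : ∏ j ∈ Finset.range n, f (i + j) = ∏ k, f k := by
  obtain ⟨m, rfl⟩ := Nat.exists_eq_succ_of_ne_zero (NeZero.ne n)
  rw [Finset.prod_range]
  exact Fintype.prod_equiv (Equiv.addLeft i) _ _
    fun j => congrArg (fun k => f (i + k)) (ZMod.natCast_zmod_val j)

lemma fibRel_eq {n : ℕ} [NeZero n] (i : ZMod n) : fibRel n i =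
    ((List.range (n - 1)).map fun j : ℕ => FreeGroup.of (i + (j : ZMod n))).prod *
      (FreeGroup.of (i - 1))⁻¹ := by
  rw [fibRel, Nat.cast_sub NeZero.one_le, ZMod.natCast_self, Nat.cast_one, zero_sub,
    ← sub_eq_add_neg]
  simp only [bind_pure_comp, List.map_eq_map, List.map_map, Function.comp_def]

namespace FibGroup

variable {n : ℕ}

def of (i : ZMod n) : FibGroup n := PresentedGroup.of i

def prodRange (i : ZMod n) (k : ℕ) : FibGroup n :=
  ((List.range k).map fun j : ℕ => of (i + (j : ZMod n))).prod

lemma prodRange_sub_one [NeZero n] (i : ZMod n) : prodRange i (n - 1) = of (i - 1) := by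
  have h := PresentedGroup.one_of_mem (show fibRel n i ∈ {w | ∃ i, w = fibRel n i} from ⟨i, rfl⟩)
  rwa [fibRel_eq, map_mul, map_inv, mul_inv_eq_one, map_list_prod, List.map_map] at h

section Squares

variable [Fact (1 < n)]

lemma of_mul_prodRange (i : ZMod n) : of i * prodRange (i + 1) (n - 2) = of (i - 1) := by
  have hn : 2 ≤ n := Fact.out (p := 1 < n)
  rw [← prodRange_sub_one, show n - 1 = n - 2 + 1 by omega]
  unfold prodRange
  rw [List.range_succ_eq_map, List.map_cons, List.prod_cons, List.map_map]
  simp only [Nat.cast_zero, add_zero, Function.comp_def, Nat.cast_succ, add_right_comm, add_assoc]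

lemma prodRange_mul_of (i : ZMod n) : prodRange i (n - 2) * of (i - 2) = of (i - 1) := by
  have hn : 2 ≤ n := Fact.out (p := 1 < n)
  have hcast : ((n - 2 : ℕ) : ZMod n) = -2 := by
    rw [Nat.cast_sub hn, ZMod.natCast_self, zero_sub, Nat.cast_ofNat]
  rw [← prodRange_sub_one, show n - 1 = n - 2 + 1 by omega]
  unfold prodRange
  rw [List.range_succ, List.map_append, List.prod_append, List.map_singleton, List.prod_singleton,
    hcast, ← sub_eq_add_neg]

lemma of_add_one_sq (i : ZMod n) : of (i + 1) ^ 2 = of i ^ 2 := by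
  have hfront := of_mul_prodRange (i + 1)
  have hback := prodRange_mul_of (i + 2)
  rw [add_sub_cancel_right, add_assoc, one_add_one_eq_two] at hfront
  rw [add_sub_cancel_right, show i + 2 - 1 = i + 1 by ring] at hback
  calc of (i + 1) ^ 2 = of (i + 1) * (prodRange (i + 2) (n - 2) * of i) := by rw [hback, sq]
    _ = of i ^ 2 := by rw [← mul_assoc, hfront, sq]

lemma of_sq (i : ZMod n) : of i ^ 2 = of 0 ^ 2 := by
  have hcast (k : ℕ) : of (k : ZMod n) ^ 2 = of 0 ^ 2 := by
    induction k with
    | zero => rw [Nat.cast_zero]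
    | succ k ih => rw [Nat.cast_succ, of_add_one_sq, ih]
  simpa only [ZMod.natCast_zmod_val] using hcast i.val

end Squares

def signGen (k : ZMod n) : ℤˣ := if k ∈ ({0, 1} : Finset (ZMod n)) then -1 else 1

section Sign

variable [Fact (1 < n)]

lemma prod_signGen : ∏ k : ZMod n, signGen k = 1 := by
  unfold signGen
  rw [Finset.prod_ite_mem, Finset.univ_inter, Finset.prod_const, Finset.card_pair zero_ne_one]
  rfl

-- `ℤˣ` is commutative of exponent two, so a relator maps to the product over all generators.
lemma lift_signGen_fibRel (i : ZMod n) : FreeGroup.lift signGen (fibRel n i) = 1 := by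
  have hn : n - 1 + 1 = n := Nat.sub_add_cancel NeZero.one_le
  rw [fibRel_eq, map_mul, map_inv, map_list_prod, List.map_map, Int.units_inv_eq_self,
    ← prod_signGen (n := n), ← ZMod.prod_range_natCast_add n _ i,
    show Finset.range n = Finset.range (n - 1 + 1) by rw [hn], Finset.prod_range_succ,
    Nat.cast_sub NeZero.one_le, ZMod.natCast_self, Nat.cast_one, zero_sub, ← sub_eq_add_neg]
  simp only [Function.comp_def, FreeGroup.lift_apply_of]
  rfl

def sign : FibGroup n →* ℤˣ :=
  PresentedGroup.toGroup (by rintro _ ⟨i, rfl⟩; exact lift_signGen_fibRel i)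

lemma sign_of (i : ZMod n) : sign (of i) = signGen i := PresentedGroup.toGroup.of _

lemma of_zero_ne_one : of (0 : ZMod n) ≠ 1 := fun h => by
  simpa [sign_of, signGen] using congrArg sign h

end Sign

section LeftOrdered

variable {G : Type*} [Group G] [LinearOrder G] [MulLeftMono G]

lemma not_forall_one_lt_map_of (hn : 2 < n) (φ : FibGroup n →* G) : ¬ ∀ i, 1 < φ (of i) := by
  have : Fact (1 < n) := ⟨by omega⟩
  intro hpos
  have hdesc (i : ZMod n) : φ (of (i + 1)) < φ (of i) := by
    have hprod : 1 < φ (prodRange (i + 1 + 1) (n - 2)) := by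
      rw [prodRange, map_list_prod, List.map_map]
      refine List.one_lt_prod_of_one_lt_of_ne_nil (fun a ha => ?_) ?_
      · obtain ⟨j, -, rfl⟩ := List.mem_map.1 ha
        exact hpos _
      · simp only [ne_eq, List.map_eq_nil_iff, List.range_eq_nil]
        omega
    calc φ (of (i + 1)) < φ (of (i + 1)) * φ (prodRange (i + 1 + 1) (n - 2)) :=
          lt_mul_of_one_lt_right' _ hprod
      _ = φ (of i) := by rw [← map_mul, of_mul_prodRange, add_sub_cancel_right]
  obtain ⟨i, hmin⟩ := Finite.exists_min fun i => φ (of i)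
  exact (hmin (i + 1)).not_gt (hdesc i)

theorem monoidHom_eq_one (hn : 2 < n) (φ : FibGroup n →* G) : φ = 1 := by
  have : Fact (1 < n) := ⟨by omega⟩
  refine PresentedGroup.ext fun i => ?_
  have hsq (j : ZMod n) : φ (of j) ^ 2 = φ (of i) ^ 2 := by
    rw [← map_pow, ← map_pow, of_sq, of_sq i]
  rcases lt_trichotomy (φ (of i)) 1 with hlt | heq | hgt
  · exact absurd (fun j => (one_lt_iff_of_sq_eq (G := Gᵒᵈ) (hsq j)).2 hlt)
      (not_forall_one_lt_map_of (G := Gᵒᵈ) hn φ)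
  · exact heq
  · exact absurd (fun j => (one_lt_iff_of_sq_eq (hsq j)).2 hgt) (not_forall_one_lt_map_of hn φ)

end LeftOrdered

end FibGroup

/-- The generalized Fibonacci group `F(n-1, n)` is not left-orderable for `n > 2`. -/
theorem stmt_4 (n : ℕ) (hn : 2 < n) : ¬ IsLeftOrderable (FibGroup n) := by
  have : Fact (1 < n) := ⟨by omega⟩
  rintro ⟨r, hr, hmul⟩
  classical
  let := linearOrderOfSTO r
  have : MulLeftStrictMono (FibGroup n) := ⟨fun a _ _ h => hmul _ _ a h⟩
  have := mulLeftMono_of_mulLeftStrictMono (FibGroup n)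
  exact FibGroup.of_zero_ne_one
    (DFunLike.congr_fun (FibGroup.monoidHom_eq_one hn (MonoidHom.id _)) (FibGroup.of 0))
end

section
/- In the generalized Fibonacci group F(n−1, n) with n ≥ 3, all the elements x₁², x₂², …, xₙ², and x₁x₂⋯xₙ are equal to a common central element t. -/
/-- The generator `xᵢ` of `F(n-1, n)`. -/
def fibGen (n : ℕ) (i : ZMod n) : FibGroup n :=
  PresentedGroup.of (rels := {w : FreeGroup (ZMod n) | ∃ i : ZMod n, w = fibRel n i}) i

def fibProd (n : ℕ) (i : ZMod n) (k : ℕ) : FibGroup n :=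
  ((List.range k).map fun j : ℕ => fibGen n (i + j)).prod

section

variable {n : ℕ}

lemma fibProd_succ (i : ZMod n) (k : ℕ) :
    fibProd n i (k + 1) = fibProd n i k * fibGen n (i + k) := by
  simp only [fibProd, List.range_succ, List.map_append, List.prod_append, List.map_singleton,
    List.prod_singleton]

lemma fibProd_succ' (i : ZMod n) (k : ℕ) :
    fibProd n i (k + 1) = fibGen n i * fibProd n (i + 1) k := by
  simp only [fibProd, List.range_succ_eq_map, List.map_cons, List.prod_cons, List.map_map,
    Function.comp_def, Nat.cast_zero, add_zero, Nat.cast_succ, add_right_comm _ _ (1 : ZMod n),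
    ← add_assoc]

lemma fibProd_sub_one (i : ZMod n) : fibProd n i (n - 1) = fibGen n (i + (n - 1 : ℕ)) := by
  have h := PresentedGroup.one_of_mem (rels := {w | ∃ i : ZMod n, w = fibRel n i}) ⟨i, rfl⟩
  rw [fibRel, map_mul, map_inv, mul_inv_eq_one, map_list_prod, List.map_map] at h
  -- `fibRel` casts `List.range (n - 1)` into `List (ZMod n)` through the list monad.
  simp only [List.pure_def, List.bind_eq_flatMap, ← List.map_eq_flatMap, List.map_map] at h
  exact h

variable [NeZero n]

lemma ZMod.natCast_self_sub_one : ((n - 1 : ℕ) : ZMod n) = -1 := by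
  rw [Nat.cast_sub NeZero.one_le, ZMod.natCast_self, Nat.cast_one, zero_sub]

lemma fibProd_sub_one_eq_fibGen_sub_one (i : ZMod n) :
    fibProd n i (n - 1) = fibGen n (i - 1) := by
  rw [fibProd_sub_one, ZMod.natCast_self_sub_one, sub_eq_add_neg]

lemma fibProd_self_eq_succ_sub_one (i : ZMod n) : fibProd n i n = fibProd n i (n - 1 + 1) := by
  rw [Nat.sub_add_cancel NeZero.one_le]

lemma fibProd_self_eq_sq (i : ZMod n) : fibProd n i n = fibGen n i ^ 2 := by
  rw [fibProd_self_eq_succ_sub_one, fibProd_succ', fibProd_sub_one_eq_fibGen_sub_one,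
    add_sub_cancel_right, sq]

lemma fibProd_self_eq_sq_sub_one (i : ZMod n) : fibProd n i n = fibGen n (i - 1) ^ 2 := by
  rw [fibProd_self_eq_succ_sub_one, fibProd_succ, fibProd_sub_one_eq_fibGen_sub_one,
    ZMod.natCast_self_sub_one, ← sub_eq_add_neg, sq]

lemma fibGen_sub_one_sq (i : ZMod n) : fibGen n (i - 1) ^ 2 = fibGen n i ^ 2 := by
  rw [← fibProd_self_eq_sq_sub_one, fibProd_self_eq_sq]

lemma fibGen_sq_eq_fibGen_zero_sq (i : ZMod n) : fibGen n i ^ 2 = fibGen n 0 ^ 2 := by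
  have h (k : ℕ) : fibGen n k ^ 2 = fibGen n 0 ^ 2 := by
    induction k with
    | zero => rw [Nat.cast_zero]
    | succ k ih =>
      rw [← ih, ← fibGen_sub_one_sq ((k + 1 : ℕ) : ZMod n), Nat.cast_succ, add_sub_cancel_right]
  rw [← ZMod.natCast_zmod_val i, h]

lemma fibGen_zero_sq_mem_center : fibGen n 0 ^ 2 ∈ Subgroup.center (FibGroup n) := by
  refine Subgroup.mem_center_iff.mpr fun g => Subgroup.mem_centralizer_singleton_iff.mp ?_
  refine PresentedGroup.generated_by _ (Subgroup.centralizer {fibGen n 0 ^ 2})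
    (fun j => Subgroup.mem_centralizer_singleton_iff.mpr ?_) g
  change fibGen n j * _ = _ * fibGen n j
  rw [← fibGen_sq_eq_fibGen_zero_sq j]
  exact (Commute.self_pow _ 2).eq

end

/-- In `F(n-1, n)` with `n ≥ 3`, all of `x₁², …, xₙ²` and `x₁x₂⋯xₙ` are equal to a
common central element `t`. -/
theorem stmt_5 (n : ℕ) (hn : 3 ≤ n) :
    ∃ t : FibGroup n, (∀ g : FibGroup n, t * g = g * t) ∧
      (∀ i : ZMod n, (fibGen n i) ^ 2 = t) ∧
      (((List.range n).map (fun j => fibGen n (((j + 1 : ℕ) : ZMod n)))).prod = t) := by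
  have : NeZero n := ⟨by omega⟩
  refine ⟨fibGen n 0 ^ 2, fun g => (Subgroup.mem_center_iff.mp fibGen_zero_sq_mem_center g).symm,
    fibGen_sq_eq_fibGen_zero_sq, ?_⟩
  have h : (List.range n).map (fun j => fibGen n ((j + 1 : ℕ) : ZMod n)) =
      (List.range n).map fun j : ℕ => fibGen n (1 + j) :=
    List.map_congr_left fun j _ => by rw [Nat.cast_succ, add_comm]
  rw [h]
  show fibProd n 1 n = _
  rw [fibProd_self_eq_sq_sub_one, sub_self]
end

section
/- The group F(2,3) = ⟨x₁,x₂,x₃ | x₁x₂ = x₃, x₂x₃ = x₁, x₃x₁ = x₂⟩ is isomorphic to the quaternion group Q₈ of order 8, and is therefore finite and not left-orderable. -/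
/-- The group `F(2,3) = ⟨x₁, x₂, x₃ | x₁x₂ = x₃, x₂x₃ = x₁, x₃x₁ = x₂⟩`. -/
def F23 : Type :=
  PresentedGroup {w : FreeGroup (ZMod 3) |
    ∃ i : ZMod 3, w = FreeGroup.of i * FreeGroup.of (i + 1) * (FreeGroup.of (i + 2))⁻¹}

instance : Group F23 := inferInstanceAs (Group (PresentedGroup _))

section

variable {G : Type*} [Group G] {x y : G}

lemma pow_eq_pow_of_natCast_eq {m k l : ℕ} (hx : x ^ m = 1) (h : (k : ZMod m) = l) :
    x ^ k = x ^ l :=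
  pow_eq_pow_iff_modEq.mpr <|
    ((ZMod.natCast_eq_natCast_iff k l m).mp h).of_dvd (orderOf_dvd_of_pow_eq_one hx)

lemma pow_val_add {m : ℕ} [NeZero m] (hx : x ^ m = 1) (i j : ZMod m) :
    x ^ (i + j).val = x ^ i.val * x ^ j.val := by
  rw [← pow_add]
  exact pow_eq_pow_of_natCast_eq hx (by simp)

lemma pow_val_neg {m : ℕ} [NeZero m] (hx : x ^ m = 1) (i : ZMod m) :
    x ^ (-i).val = (x ^ i.val)⁻¹ := by
  rw [eq_inv_iff_mul_eq_one, ← pow_val_add hx, neg_add_cancel, ZMod.val_zero, pow_zero]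

lemma pow_mul_eq_mul_inv_pow (hxy : x * y = y * x⁻¹) (k : ℕ) : x ^ k * y = y * (x ^ k)⁻¹ := by
  have : SemiconjBy y x⁻¹ x := hxy.symm
  rw [← inv_pow]
  exact (this.pow_right k).symm

lemma pow_two_mul_eq_one {n : ℕ} (hy : y ^ 2 = x ^ n) (hxy : x * y = y * x⁻¹) :
    x ^ (2 * n) = 1 := by
  have h : x ^ n = (x ^ n)⁻¹ := mul_left_cancel (a := y) <| by
    rw [← pow_mul_eq_mul_inv_pow hxy, ← hy, ← pow_succ, ← pow_succ']
  rw [two_mul, pow_add, mul_eq_one_iff_eq_inv]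
  exact h

end

namespace QuaternionGroup

variable {G : Type*} [Group G] {n : ℕ} [NeZero n]

def lift (x y : G) (hy : y ^ 2 = x ^ n) (hxy : x * y = y * x⁻¹) : QuaternionGroup n →* G where
  toFun
    | a i => x ^ i.val
    | xa i => y * x ^ i.val
  map_one' := by
    show x ^ (0 : ZMod (2 * n)).val = 1
    rw [ZMod.val_zero, pow_zero]
  map_mul' := by
    have hx := pow_two_mul_eq_one hy hxy
    rintro (i | i) (j | j)
    · simp only [a_mul_a, pow_val_add hx]
    · simp only [a_mul_xa, sub_eq_neg_add, pow_val_add hx, pow_val_neg hx, ← mul_assoc,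
        pow_mul_eq_mul_inv_pow hxy]
    · simp only [xa_mul_a, pow_val_add hx, mul_assoc]
    · have hn : x ^ (n : ZMod (2 * n)).val = y ^ 2 := by
        rw [hy]; exact pow_eq_pow_of_natCast_eq hx (by simp)
      rw [xa_mul_xa, add_sub_assoc, sub_eq_neg_add]
      dsimp only
      rw [pow_val_add hx, pow_val_add hx, pow_val_neg hx, hn, mul_assoc y,
        ← mul_assoc (x ^ i.val), pow_mul_eq_mul_inv_pow hxy]
      simp only [sq, mul_assoc]

@[simp] lemma lift_a (x y : G) (hy : y ^ 2 = x ^ n) (hxy : x * y = y * x⁻¹) (i : ZMod (2 * n)) :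
    lift x y hy hxy (a i) = x ^ i.val := rfl

@[simp] lemma lift_xa (x y : G) (hy : y ^ 2 = x ^ n) (hxy : x * y = y * x⁻¹) (i : ZMod (2 * n)) :
    lift x y hy hxy (xa i) = y * x ^ i.val := rfl

@[ext] lemma hom_ext {f g : QuaternionGroup n →* G} (ha : f (a 1) = g (a 1))
    (hxa : f (xa 0) = g (xa 0)) : f = g := by
  have hxa_eq (i : ZMod (2 * n)) : xa i = xa 0 * a i := by rw [xa_mul_a, zero_add]
  ext (i | i)
  · rw [← ZMod.natCast_zmod_val i, ← a_one_pow, map_pow, map_pow, ha]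
  · rw [hxa_eq, map_mul, map_mul, hxa, ← ZMod.natCast_zmod_val i, ← a_one_pow, map_pow,
      map_pow, ha]

end QuaternionGroup

theorem not_isLeftOrderable_of_finite (G : Type*) [Group G] [Finite G] [Nontrivial G] :
    ¬ IsLeftOrderable G := by
  rintro ⟨r, hr, hmul⟩
  have pow_pos (g : G) (hg : r 1 g) (k : ℕ) : r 1 (g ^ (k + 1)) := by
    induction k with
    | zero => rwa [zero_add, pow_one]
    | succ k ih =>
      have := hmul _ _ g ih
      rw [mul_one, ← pow_succ'] at this
      exact _root_.trans hg this
  have not_pos (g : G) : ¬ r 1 g := fun hg => by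
    have := pow_pos g hg (orderOf g - 1)
    rw [Nat.sub_add_cancel (orderOf_pos g), pow_orderOf_eq_one] at this
    exact irrefl_of r 1 this
  obtain ⟨g, hg⟩ := exists_ne (1 : G)
  rcases trichotomous_of r 1 g with h | h | h
  · exact not_pos g h
  · exact hg h.symm
  · have := hmul _ _ g⁻¹ h
    rw [inv_mul_cancel, mul_one] at this
    exact not_pos g⁻¹ this

namespace F23

def gen (i : ZMod 3) : F23 := PresentedGroup.of i

lemma gen_mul_gen (i : ZMod 3) : gen i * gen (i + 1) = gen (i + 2) :=
  mul_inv_eq_one.mp (PresentedGroup.one_of_mem ⟨i, rfl⟩)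

lemma gen_zero_mul_gen_one : gen 0 * gen 1 = gen 2 := gen_mul_gen 0

lemma gen_zero_mul_gen_one_eq_mul_inv : gen 0 * gen 1 = gen 1 * (gen 0)⁻¹ := by
  rw [eq_mul_inv_iff_mul_eq, gen_zero_mul_gen_one]
  exact gen_mul_gen 2

lemma gen_one_sq : gen 1 ^ 2 = gen 0 ^ 2 := by
  have h : gen 1 * (gen 0 * gen 1) = gen 0 := by
    rw [gen_zero_mul_gen_one]
    exact gen_mul_gen 1
  rw [gen_zero_mul_gen_one_eq_mul_inv, ← mul_assoc, mul_inv_eq_iff_eq_mul] at h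
  rw [sq, sq, h]

open QuaternionGroup

def toQuaternionGroup : F23 →* QuaternionGroup 2 :=
  PresentedGroup.toGroup (f := ![a 1, xa 0, a 1 * xa 0]) (by rintro _ ⟨i, rfl⟩; revert i; decide)

def ofQuaternionGroup : QuaternionGroup 2 →* F23 :=
  lift (gen 0) (gen 1) gen_one_sq gen_zero_mul_gen_one_eq_mul_inv

lemma toQuaternionGroup_gen (i : ZMod 3) :
    toQuaternionGroup (gen i) = ![a 1, xa 0, a 1 * xa 0] i :=
  PresentedGroup.toGroup.of _

lemma ofQuaternionGroup_a_one : ofQuaternionGroup (a 1) = gen 0 := by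
  rw [ofQuaternionGroup, lift_a]
  exact pow_one _

lemma ofQuaternionGroup_xa_zero : ofQuaternionGroup (xa 0) = gen 1 := by
  rw [ofQuaternionGroup, lift_xa, ZMod.val_zero, pow_zero, mul_one]

lemma ofQuaternionGroup_toQuaternionGroup_gen (i : ZMod 3) :
    ofQuaternionGroup (toQuaternionGroup (gen i)) = gen i := by
  rw [toQuaternionGroup_gen]
  fin_cases i
  · exact ofQuaternionGroup_a_one
  · exact ofQuaternionGroup_xa_zero
  · show ofQuaternionGroup (a 1 * xa 0) = gen 2
    rw [map_mul, ofQuaternionGroup_a_one, ofQuaternionGroup_xa_zero, gen_zero_mul_gen_one]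

def mulEquivQuaternionGroup : F23 ≃* QuaternionGroup 2 :=
  toQuaternionGroup.toMulEquiv ofQuaternionGroup
    (PresentedGroup.ext ofQuaternionGroup_toQuaternionGroup_gen)
    (QuaternionGroup.hom_ext
      (by rw [MonoidHom.comp_apply, ofQuaternionGroup_a_one, toQuaternionGroup_gen]; rfl)
      (by rw [MonoidHom.comp_apply, ofQuaternionGroup_xa_zero, toQuaternionGroup_gen]; rfl))

end F23

/-- `F(2,3)` is isomorphic to the quaternion group `Q₈` of order `8`, hence finite and
not left-orderable. -/
theorem stmt_7 :
    Nonempty (F23 ≃* QuaternionGroup 2) ∧ Finite F23 ∧ ¬ IsLeftOrderable F23 := by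
  have : Finite F23 := Finite.of_equiv _ F23.mulEquivQuaternionGroup.symm.toEquiv
  have : Nontrivial F23 := F23.mulEquivQuaternionGroup.toEquiv.nontrivial
  exact ⟨⟨F23.mulEquivQuaternionGroup⟩, ‹_›, not_isLeftOrderable_of_finite F23⟩
end

section
/- A countable group is left-orderable if and only if it embeds into the group of orientation-preserving homeomorphisms of the real line. -/
/-!
If `G` is countable and left-ordered, `G` acts faithfully by left translation of the first
coordinate on `G ×ₗ ℚ`, a countable dense linear order without endpoints, hence order-isomorphic
to `ℚ` by Cantor's theorem; and every order automorphism of `ℚ` extends to one of `ℝ`, by taking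
suprema over rationals, compatibly with composition.

Conversely, compare two order automorphisms of `ℝ` lexicographically by their values along an
enumeration of `ℚ`. They are determined by these values, and post-composing with an increasing map
preserves the comparison, so this is a left-invariant total order on `Homeo₊(ℝ)`, which restricts
to any subgroup.
-/

open Function

theorem isLeftOrderable_of_linearOrder (G : Type*) [Group G] [LinearOrder G]
    [MulLeftMono G] : IsLeftOrderable G :=
  ⟨(· < ·), inferInstance, fun _ _ z h => mul_lt_mul_right h z⟩

theorem IsLeftOrderable.exists_linearOrder {G : Type*} [Group G] (h : IsLeftOrderable G) :
    ∃ _ : LinearOrder G, MulLeftMono G := by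
  obtain ⟨r, _, hr⟩ := h
  classical
  let := linearOrderOfSTO r
  have : MulLeftStrictMono G := ⟨fun z _ _ h => hr _ _ z h⟩
  exact ⟨_, mulLeftMono_of_mulLeftStrictMono G⟩

namespace OrderIso

def autCongr {α β : Type*} [Preorder α] [Preorder β] (e : α ≃o β) : (α ≃o α) ≃* (β ≃o β) where
  toFun f := e.symm.trans (f.trans e)
  invFun g := e.trans (g.trans e.symm)
  left_inv f := by ext; simp
  right_inv g := by ext; simp
  map_mul' f g := by ext; simp [RelIso.mul_apply]

variable (G : Type*) [Group G] [Preorder G] [MulLeftMono G] (β : Type*) [Preorder β]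

def mulLeftProdLex : G →* (G ×ₗ β ≃o G ×ₗ β) where
  toFun g := Prod.Lex.prodLexCongr (mulLeft g) (refl β)
  map_one' := RelIso.ext fun x => by simp [Prod.map_apply']
  map_mul' g h := RelIso.ext fun x => by simp [RelIso.mul_apply, Prod.map_apply', mul_assoc]

theorem mulLeftProdLex_injective [Nonempty β] : Injective (mulLeftProdLex G β) := by
  intro g h hgh
  obtain ⟨b⟩ := ‹Nonempty β›
  have := congr($hgh (toLex (1, b)))
  simpa [mulLeftProdLex] using this

end OrderIso

theorem Pi.toLex_comp_lt_toLex_comp {ι α β : Type*} [LT ι] [Preorder α] [Preorder β] {f : α → β}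
    (hf : StrictMono f) {x y : ι → α} (h : toLex x < toLex y) : toLex (f ∘ x) < toLex (f ∘ y) :=
  let ⟨i, hlt, hi⟩ := h
  ⟨i, fun j hj => congrArg f (hlt j hj), hf hi⟩

namespace Real

theorem orderIso_ext_ratCast {f g : ℝ ≃o ℝ} (h : ∀ q : ℚ, f q = g q) : f = g :=
  DFunLike.coe_injective <| Rat.denseRange_cast.equalizer f.continuous g.continuous (funext h)

theorem eq_id_of_monotone_of_ratCast {f : ℝ → ℝ} (hf : Monotone f) (h : ∀ q : ℚ, f q = q) :
    f = id := by
  funext x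
  refine le_antisymm (le_of_forall_gt fun c hc => ?_) (le_of_forall_lt fun c hc => ?_)
  · obtain ⟨q, hxq, hqc⟩ := exists_rat_btwn hc
    exact (h q ▸ hf hxq.le).trans_lt hqc
  · obtain ⟨q, hcq, hqx⟩ := exists_rat_btwn hc
    exact hcq.trans_le (h q ▸ hf hqx.le)

noncomputable def ratExtend (φ : ℚ ≃o ℚ) (x : ℝ) : ℝ :=
  sSup ((fun q : ℚ => (φ q : ℝ)) '' {q : ℚ | (q : ℝ) < x})

section ratExtend

variable (φ : ℚ ≃o ℚ)

theorem ratExtend_set_nonempty (x : ℝ) :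
    ((fun q : ℚ => (φ q : ℝ)) '' {q : ℚ | (q : ℝ) < x}).Nonempty :=
  let ⟨q, hq⟩ := exists_rat_lt x
  ⟨_, q, hq, rfl⟩

theorem ratExtend_set_bddAbove (x : ℝ) :
    BddAbove ((fun q : ℚ => (φ q : ℝ)) '' {q : ℚ | (q : ℝ) < x}) := by
  obtain ⟨p, hp⟩ := exists_rat_gt x
  refine ⟨φ p, ?_⟩
  rintro _ ⟨q, hq : (q : ℝ) < x, rfl⟩
  exact Rat.cast_le.2 (φ.monotone (Rat.cast_le.1 (hq.trans hp).le))

theorem ratExtend_mono : Monotone (ratExtend φ) := fun _ y hxy =>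
  csSup_le_csSup (ratExtend_set_bddAbove φ y) (ratExtend_set_nonempty φ _)
    (Set.image_mono fun _ hq => hq.trans_le hxy)

@[simp]
theorem ratExtend_ratCast (p : ℚ) : ratExtend φ p = φ p := by
  refine le_antisymm (csSup_le (ratExtend_set_nonempty φ _) ?_) (le_of_forall_lt fun c hc => ?_)
  · rintro _ ⟨q, hq : (q : ℝ) < p, rfl⟩
    exact Rat.cast_le.2 (φ.monotone (Rat.cast_le.1 hq.le))
  · obtain ⟨r, hcr, hrp⟩ := exists_rat_btwn hc
    have hr : φ.symm r < p := φ.symm_apply_lt.2 (by exact_mod_cast hrp)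
    refine hcr.trans_le (le_csSup (ratExtend_set_bddAbove φ _) ⟨φ.symm r, ?_, by simp⟩)
    exact_mod_cast hr

theorem ratExtend_ratExtend_symm (x : ℝ) : ratExtend φ (ratExtend φ.symm x) = x :=
  congrFun (eq_id_of_monotone_of_ratCast ((ratExtend_mono φ).comp (ratExtend_mono φ.symm))
    fun q => by simp) x

noncomputable def ratExtendIso : ℝ ≃o ℝ :=
  Equiv.toOrderIso ⟨ratExtend φ, ratExtend φ.symm,
      fun x => by simpa using ratExtend_ratExtend_symm φ.symm x, ratExtend_ratExtend_symm φ⟩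
    (ratExtend_mono φ) (ratExtend_mono φ.symm)

@[simp]
theorem ratExtendIso_ratCast (q : ℚ) : ratExtendIso φ q = φ q :=
  ratExtend_ratCast φ q

noncomputable def ratExtendHom : (ℚ ≃o ℚ) →* (ℝ ≃o ℝ) where
  toFun := ratExtendIso
  map_one' := orderIso_ext_ratCast fun q => by simp [RelIso.one_apply]
  map_mul' φ ψ := orderIso_ext_ratCast fun q => by simp [RelIso.mul_apply]

theorem ratExtendHom_injective : Injective ratExtendHom := fun φ ψ h =>
  RelIso.ext fun q => by simpa [ratExtendHom] using congr($h (q : ℝ))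

end ratExtend

noncomputable def orderIsoEvalRat (f : ℝ ≃o ℝ) : Lex (ℕ → ℝ) :=
  toLex fun n => f ((Denumerable.eqv ℚ).symm n)

theorem orderIsoEvalRat_injective : Injective orderIsoEvalRat := fun f g h =>
  orderIso_ext_ratCast fun q => by
    simpa only [orderIsoEvalRat, ofLex_toLex, Equiv.symm_apply_apply] using
      congr(ofLex $h (Denumerable.eqv ℚ q))

theorem orderIsoEvalRat_mul_lt_mul {f g : ℝ ≃o ℝ} (h : ℝ ≃o ℝ)
    (hfg : orderIsoEvalRat f < orderIsoEvalRat g) :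
    orderIsoEvalRat (h * f) < orderIsoEvalRat (h * g) :=
  Pi.toLex_comp_lt_toLex_comp h.strictMono hfg

end Real

theorem isLeftOrderable_of_injective_orderIso_real {G : Type*} [Group G] (f : G →* (ℝ ≃o ℝ))
    (hf : Injective f) : IsLeftOrderable G := by
  let := LinearOrder.lift' (Real.orderIsoEvalRat ∘ f) (Real.orderIsoEvalRat_injective.comp hf)
  have : MulLeftStrictMono G := ⟨fun g x y hxy => show
    Real.orderIsoEvalRat (f (g * x)) < Real.orderIsoEvalRat (f (g * y)) by
    simpa only [map_mul] using Real.orderIsoEvalRat_mul_lt_mul (f g) hxy⟩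
  have := mulLeftMono_of_mulLeftStrictMono G
  exact isLeftOrderable_of_linearOrder G

theorem exists_injective_monoidHom_orderIso_real (G : Type*) [Group G] [LinearOrder G]
    [MulLeftMono G] [Countable G] : ∃ f : G →* (ℝ ≃o ℝ), Injective f := by
  have : Countable (G ×ₗ ℚ) := inferInstanceAs (Countable (G × ℚ))
  obtain ⟨e⟩ := Order.iso_of_countable_dense (G ×ₗ ℚ) ℚ
  exact ⟨Real.ratExtendHom.comp ((e.autCongr : _ →* _).comp (OrderIso.mulLeftProdLex G ℚ)),
    Real.ratExtendHom_injective.comp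
      (e.autCongr.injective.comp (OrderIso.mulLeftProdLex_injective G ℚ))⟩

/-- A countable group is left-orderable iff it embeds into the group `Homeo₊(ℝ)` of
orientation-preserving (i.e. strictly increasing) homeomorphisms of the real line,
which is the group of order-isomorphisms of `ℝ`. -/
theorem stmt_14 (G : Type*) [Group G] [Countable G] :
    IsLeftOrderable G ↔ ∃ f : G →* (ℝ ≃o ℝ), Function.Injective f := by
  refine ⟨fun h => ?_, fun ⟨f, hf⟩ => isLeftOrderable_of_injective_orderIso_real f hf⟩
  obtain ⟨_, _⟩ := h.exists_linearOrder
  exact exists_injective_monoidHom_orderIso_real G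
end
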